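/- Let α ∈ (0,2) and let S_* be the subset of ℝ² ≅ ℂ given by S_* = ∪_{n≥0} C_n, where C_n = { n·e^{2πik/(n+1)} : k = 0,1,…,n }. Then there exists a unit flux from the origin 0 ∈ S_* to infinity with finite energy for the resistances r(x,y) = max(1, |x−y|^{2+α}); that is, there exists an antisymmetric function f : S_* × S_* → ℝ such that for every x ∈ S_* the sum Σ_{y∈S_*} f(x,y) converges absolutely and equals 1 if x = 0 and 0 otherwise, and (1/2)·Σ_{x,y∈S_*, x≠y} max(1,|x−y|^{2+α})·f(x,y)² < ∞. (By the Royden–Lyons criterion this expresses that the random walk on S_* with jump weights φ_{p,α}(|x−y|) = min(1,|x−y|^{−2−α}) is transient for all α ∈ (0,2).) -/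

import Mathlib

/-!
Sort the points of `S_*` into dyadic layers `L_m = {x : 2^(m-1) ≤ |x| < 2^m}` (with `L_0 = {0}`);
since `S_*` has `n + 1` points on the circle of radius `n`, `4^(m-1) ≤ |L_m| ≤ 4^m`. Spread the
unit flux uniformly: every pair `(x, y) ∈ L_m × L_(m+1)` carries `1 / (|L_m| |L_(m+1)|)`. Then the
outflow of each `x ∈ L_m` is `1/|L_m| - [m ≠ 0] 1/|L_m|`, and the energy is at most
`∑_m (2^(m+2))^(2+α) / (|L_m| |L_(m+1)|) ≲ ∑_m 2^((α-2)m) < ∞`. To sum over pairs, the energy of a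
pair is bounded by `w x * w y` with `w x = 2^7 (2^(α/2-3))^m` for `x ∈ L_m`, which is summable
because `4 · 2^(α/2-3) < 1`.
-/

open Complex

/-- The set `C_n = { n·e^{2πik/(n+1)} : k = 0,…,n } ⊆ ℂ`. -/
noncomputable def circPts (n : ℕ) : Set ℂ :=
  {z : ℂ | ∃ k : ℕ, k ≤ n ∧
    z = (n : ℂ) * Complex.exp (2 * (Real.pi : ℂ) * Complex.I * (k : ℂ) / ((n : ℂ) + 1))}

/-- The set `S_* = ⋃_{n≥0} C_n`. -/
noncomputable def Sstar : Set ℂ := ⋃ n : ℕ, circPts n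

namespace LayeredFlux

variable {X : Type*} (ℓ : X → ℕ)

noncomputable def layerCard (m : ℕ) : ℕ := Nat.card (ℓ ⁻¹' {m})

noncomputable def forwardFlux (x y : X) : ℝ :=
  if ℓ y = ℓ x + 1 then ((layerCard ℓ (ℓ x) : ℝ) * layerCard ℓ (ℓ x + 1))⁻¹ else 0

noncomputable def layerFlux (x y : X) : ℝ := forwardFlux ℓ x y - forwardFlux ℓ y x

theorem layerFlux_antisymm (x y : X) : layerFlux ℓ x y = -layerFlux ℓ y x := by
  simp only [layerFlux, neg_sub]

variable {ℓ}

theorem layerFlux_of_level_eq_succ {x y : X} (h : ℓ y = ℓ x + 1) :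
    layerFlux ℓ x y = ((layerCard ℓ (ℓ x) : ℝ) * layerCard ℓ (ℓ x + 1))⁻¹ := by
  simp [layerFlux, forwardFlux, h, show ℓ x ≠ ℓ x + 1 + 1 by omega]

theorem layerFlux_of_not_adjacent {x y : X} (hxy : ℓ y ≠ ℓ x + 1) (hyx : ℓ x ≠ ℓ y + 1) :
    layerFlux ℓ x y = 0 := by
  simp [layerFlux, forwardFlux, hxy, hyx]

theorem hasSum_ite_level {n : ℕ} (hfin : (ℓ ⁻¹' {n}).Finite) (c : ℝ) :
    HasSum (fun y => if ℓ y = n then c else 0) (layerCard ℓ n * c) := by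
  have : Finite (ℓ ⁻¹' {n}) := hfin
  have h : HasSum (fun _ : ℓ ⁻¹' {n} => c) (layerCard ℓ n * c) := by
    rw [layerCard, ← nsmul_eq_mul, ← tsum_const]
    exact Summable.of_finite.hasSum
  have e : (fun y => if ℓ y = n then c else 0) = (ℓ ⁻¹' {n}).indicator (fun _ => c) := by
    ext y; simp [Set.indicator]
  rw [e]
  exact hasSum_subtype_iff_indicator.1 h

theorem mul_layerFlux_sq_le {r : X → X → ℝ} {w : X → ℝ} (hr : ∀ x y, r x y = r y x)
    (hw : ∀ x, 0 ≤ w x)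
    (hadj : ∀ x y, ℓ y = ℓ x + 1 →
      r x y * (((layerCard ℓ (ℓ x) : ℝ) * layerCard ℓ (ℓ x + 1))⁻¹) ^ 2 ≤ w x * w y)
    (x y : X) : r x y * layerFlux ℓ x y ^ 2 ≤ w x * w y := by
  by_cases hxy : ℓ y = ℓ x + 1
  · rw [layerFlux_of_level_eq_succ hxy]
    exact hadj x y hxy
  by_cases hyx : ℓ x = ℓ y + 1
  · rw [layerFlux_antisymm, neg_sq, layerFlux_of_level_eq_succ hyx, hr, mul_comm (w x)]
    exact hadj y x hyx
  rw [layerFlux_of_not_adjacent hxy hyx, zero_pow two_ne_zero, mul_zero]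
  exact mul_nonneg (hw x) (hw y)

variable (hℓ : ∀ m, layerCard ℓ m ≠ 0)
include hℓ

theorem finite_level_preimage (m : ℕ) : (ℓ ⁻¹' {m}).Finite :=
  Set.finite_coe_iff.1 (Nat.finite_of_card_ne_zero (hℓ m))

theorem hasSum_forwardFlux (x : X) : HasSum (forwardFlux ℓ x) (layerCard ℓ (ℓ x) : ℝ)⁻¹ := by
  have hne : (layerCard ℓ (ℓ x + 1) : ℝ) ≠ 0 := by exact_mod_cast hℓ _
  have h := hasSum_ite_level (finite_level_preimage hℓ (ℓ x + 1))
    ((layerCard ℓ (ℓ x) : ℝ) * layerCard ℓ (ℓ x + 1))⁻¹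
  rwa [show (layerCard ℓ (ℓ x + 1) : ℝ) * ((layerCard ℓ (ℓ x) : ℝ) * layerCard ℓ (ℓ x + 1))⁻¹ =
    (layerCard ℓ (ℓ x) : ℝ)⁻¹ by field_simp] at h

theorem hasSum_forwardFlux_into (x : X) :
    HasSum (fun y => forwardFlux ℓ y x) (if ℓ x = 0 then 0 else (layerCard ℓ (ℓ x) : ℝ)⁻¹) := by
  by_cases hx : ℓ x = 0
  · simp [hx, forwardFlux, hasSum_zero]
  obtain ⟨m, hm⟩ := Nat.exists_eq_add_one_of_ne_zero hx
  have hne : (layerCard ℓ m : ℝ) ≠ 0 := by exact_mod_cast hℓ _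
  have h := hasSum_ite_level (finite_level_preimage hℓ m)
    ((layerCard ℓ m : ℝ) * layerCard ℓ (m + 1))⁻¹
  rw [show (layerCard ℓ m : ℝ) * ((layerCard ℓ m : ℝ) * layerCard ℓ (m + 1))⁻¹ =
    (layerCard ℓ (m + 1) : ℝ)⁻¹ by field_simp] at h
  rw [if_neg hx, hm]
  convert h using 2 with y
  by_cases hy : m = ℓ y <;> simp [forwardFlux, hm, hy, eq_comm (a := ℓ y)]

theorem hasSum_layerFlux (x : X) :
    HasSum (layerFlux ℓ x) (if ℓ x = 0 then (layerCard ℓ 0 : ℝ)⁻¹ else 0) := by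
  have e : (if ℓ x = 0 then (layerCard ℓ 0 : ℝ)⁻¹ else 0) =
      (layerCard ℓ (ℓ x) : ℝ)⁻¹ - (if ℓ x = 0 then 0 else (layerCard ℓ (ℓ x) : ℝ)⁻¹) := by
    split_ifs with hx <;> simp [hx]
  rw [e]
  exact (hasSum_forwardFlux hℓ x).sub (hasSum_forwardFlux_into hℓ x)

theorem summable_pow_level {B c : ℝ} (hc : 0 ≤ c) (hBc : B * c < 1)
    (hcard : ∀ m, (layerCard ℓ m : ℝ) ≤ B ^ m) : Summable fun x => c ^ ℓ x := by
  have hB : 0 ≤ B := by simpa using (Nat.cast_nonneg _).trans (hcard 1)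
  have : ∀ m, Finite (ℓ ⁻¹' {m}) := finite_level_preimage hℓ
  refine (summable_partition (fun x => pow_nonneg hc (ℓ x)) (s := fun m => ℓ ⁻¹' {m})
    fun x => ⟨ℓ x, rfl, fun m hm => hm.symm⟩).2 ⟨fun m => Summable.of_finite, ?_⟩
  have hlayer (m : ℕ) : ∑' x : ℓ ⁻¹' {m}, c ^ ℓ x = layerCard ℓ m * c ^ m := by
    rw [tsum_congr fun x : ℓ ⁻¹' {m} => congrArg (c ^ ·) x.2, tsum_const, nsmul_eq_mul]
    rfl
  refine .of_nonneg_of_le (fun m => by rw [hlayer]; positivity) (fun m => ?_)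
    (summable_geometric_of_lt_one (mul_nonneg hB hc) hBc)
  rw [hlayer, mul_pow]
  exact mul_le_mul_of_nonneg_right (hcard m) (pow_nonneg hc m)

end LayeredFlux

noncomputable def circPt (n k : ℕ) : ℂ :=
  (n : ℂ) * Complex.exp (2 * (Real.pi : ℂ) * Complex.I * (k : ℂ) / ((n : ℂ) + 1))

theorem isPrimitiveRoot_exp_succ (n : ℕ) :
    IsPrimitiveRoot (exp (2 * Real.pi * I / (n + 1))) (n + 1) := by
  exact_mod_cast isPrimitiveRoot_exp (n + 1) n.succ_ne_zero

theorem circPt_eq_mul_pow (n k : ℕ) : circPt n k = n * exp (2 * Real.pi * I / (n + 1)) ^ k := by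
  rw [circPt, ← exp_nat_mul, mul_div_assoc', mul_comm (k : ℂ)]

theorem norm_circPt (n k : ℕ) : ‖circPt n k‖ = n := by
  rw [circPt_eq_mul_pow, norm_mul, norm_pow,
    (isPrimitiveRoot_exp_succ n).norm'_eq_one n.succ_ne_zero]
  simp

theorem eq_and_eq_of_circPt_eq {n n' k k' : ℕ} (hk : k ≤ n) (hk' : k' ≤ n')
    (h : circPt n k = circPt n' k') : n = n' ∧ k = k' := by
  have hn : n = n' := by exact_mod_cast (norm_circPt n k).symm.trans (h ▸ norm_circPt n' k')
  subst hn
  refine ⟨rfl, ?_⟩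
  rcases Nat.eq_zero_or_pos n with rfl | hpos
  · omega
  rw [circPt_eq_mul_pow, circPt_eq_mul_pow] at h
  exact (isPrimitiveRoot_exp_succ n).pow_inj (by omega) (by omega)
    (mul_left_cancel₀ (by exact_mod_cast hpos.ne') h)

theorem mem_Sstar_iff {z : ℂ} : z ∈ Sstar ↔ ∃ n k, k ≤ n ∧ z = circPt n k := by
  simp [Sstar, circPts, circPt]

theorem circPt_mem_Sstar {n k : ℕ} (h : k ≤ n) : circPt n k ∈ Sstar :=
  mem_Sstar_iff.2 ⟨n, k, h, rfl⟩

theorem zero_mem_Sstar : (0 : ℂ) ∈ Sstar := by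
  simpa [circPt] using circPt_mem_Sstar (le_refl 0)

namespace Sstar

theorem norm_eq_floor (x : Sstar) : ‖(x : ℂ)‖ = ⌊‖(x : ℂ)‖⌋₊ := by
  obtain ⟨n, k, -, hx⟩ := mem_Sstar_iff.1 x.2
  simp [hx, norm_circPt]

noncomputable def level (x : Sstar) : ℕ := ⌊‖(x : ℂ)‖⌋₊.size

theorem norm_lt_two_pow_level (x : Sstar) : ‖(x : ℂ)‖ < 2 ^ level x := by
  rw [norm_eq_floor]
  exact_mod_cast Nat.lt_size_self _

theorem level_eq_zero_iff (x : Sstar) : level x = 0 ↔ (x : ℂ) = 0 := by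
  rw [level, Nat.size_eq_zero, ← norm_eq_zero, ← Nat.cast_eq_zero (R := ℝ), ← norm_eq_floor]

theorem level_circPt {n k : ℕ} (h : k ≤ n) : level ⟨circPt n k, circPt_mem_Sstar h⟩ = n.size := by
  simp [level, norm_circPt]

theorem norm_sub_le_two_pow {x y : Sstar} {n : ℕ} (hx : level x ≤ n) (hy : level y ≤ n) :
    ‖(x : ℂ) - y‖ ≤ 2 ^ (n + 1) := by
  have hx' := (norm_lt_two_pow_level x).trans_le (pow_le_pow_right₀ one_le_two hx)
  have hy' := (norm_lt_two_pow_level y).trans_le (pow_le_pow_right₀ one_le_two hy)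
  rw [pow_succ]
  linarith [norm_sub_le (x : ℂ) y]

open LayeredFlux Finset

theorem layerCard_level_zero : layerCard level 0 = 1 := by
  rw [layerCard, Nat.card_coe_set_eq, Set.ncard_eq_one]
  exact ⟨⟨0, zero_mem_Sstar⟩, Set.ext fun x => by simp [level_eq_zero_iff, Subtype.ext_iff]⟩

theorem coe_image_level_preimage_subset (m : ℕ) :
    ((↑) : Sstar → ℂ) '' (level ⁻¹' {m}) ⊆
      ((range (2 ^ m) ×ˢ range (2 ^ m)).image fun p => circPt p.1 p.2 : Set ℂ) := by
  rintro _ ⟨x, hx, rfl⟩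
  obtain ⟨n, k, hk, hxn⟩ := mem_Sstar_iff.1 x.2
  have hn : n < 2 ^ m := by
    have := norm_lt_two_pow_level x
    rw [show level x = m from hx, hxn, norm_circPt] at this
    exact_mod_cast this
  simp only [coe_image, Set.mem_image, mem_coe, mem_product, mem_range]
  exact ⟨(n, k), ⟨hn, by omega⟩, hxn.symm⟩

theorem image_subset_coe_image_level_preimage (m : ℕ) :
    ((range (2 ^ m) ×ˢ range (2 ^ m)).image fun p => circPt (2 ^ m + p.1) p.2 : Set ℂ) ⊆
      ((↑) : Sstar → ℂ) '' (level ⁻¹' {m + 1}) := by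
  intro z hz
  simp only [coe_image, Set.mem_image, mem_coe, mem_product, mem_range] at hz
  obtain ⟨⟨i, j⟩, ⟨hi, hj⟩, rfl⟩ := hz
  have hj' : j ≤ 2 ^ m + i := by dsimp only at hj; omega
  refine ⟨⟨_, circPt_mem_Sstar hj'⟩, ?_, rfl⟩
  rw [Set.mem_preimage, level_circPt hj', Set.mem_singleton_iff]
  exact le_antisymm (Nat.size_le.2 (by rw [pow_succ]; omega)) (Nat.lt_size.2 (by omega))

theorem layerCard_level_le (m : ℕ) : layerCard level m ≤ 4 ^ m := by
  rw [layerCard, Nat.card_coe_set_eq, ← Set.ncard_image_of_injective _ Subtype.val_injective]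
  calc _ ≤ (((range (2 ^ m) ×ˢ range (2 ^ m)).image fun p => circPt p.1 p.2 : Finset ℂ) :
        Set ℂ).ncard := Set.ncard_le_ncard (coe_image_level_preimage_subset m)
    _ ≤ (range (2 ^ m) ×ˢ range (2 ^ m)).card := by
        rw [Set.ncard_coe_finset]
        exact card_image_le
    _ = 4 ^ m := by simp [← mul_pow]

theorem four_pow_le_layerCard_level_succ (m : ℕ) : 4 ^ m ≤ layerCard level (m + 1) := by
  rw [layerCard, Nat.card_coe_set_eq, ← Set.ncard_image_of_injective _ Subtype.val_injective]
  have hinj : Set.InjOn (fun p : ℕ × ℕ => circPt (2 ^ m + p.1) p.2)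
      (range (2 ^ m) ×ˢ range (2 ^ m) : Finset (ℕ × ℕ)) := by
    rintro ⟨i, j⟩ hij ⟨i', j'⟩ hij' h
    simp only [coe_product, coe_range, Set.mem_prod, Set.mem_Iio] at hij hij'
    obtain ⟨hi, hj⟩ := eq_and_eq_of_circPt_eq (by omega) (by omega) h
    simp only [Prod.mk.injEq]
    omega
  calc 4 ^ m = (range (2 ^ m) ×ˢ range (2 ^ m)).card := by simp [← mul_pow]
    _ = (((range (2 ^ m) ×ˢ range (2 ^ m)).image fun p => circPt (2 ^ m + p.1) p.2 :
        Finset ℂ) : Set ℂ).ncard := by rw [Set.ncard_coe_finset, card_image_of_injOn hinj]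
    _ ≤ _ := Set.ncard_le_ncard (image_subset_coe_image_level_preimage m)
        ((finite_toSet _).subset (coe_image_level_preimage_subset (m + 1)))

theorem four_pow_le_four_mul_layerCard_level (m : ℕ) : 4 ^ m ≤ 4 * layerCard level m := by
  cases m with
  | zero => simp [layerCard_level_zero]
  | succ m =>
    rw [pow_succ, mul_comm]
    exact Nat.mul_le_mul_left 4 (four_pow_le_layerCard_level_succ m)

theorem layerCard_level_ne_zero (m : ℕ) : layerCard level m ≠ 0 := by
  have := four_pow_le_four_mul_layerCard_level m
  have := Nat.one_le_pow m 4 (by norm_num)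
  omega

theorem inv_layerCard_level_mul_le (m : ℕ) :
    ((layerCard level m : ℝ) * layerCard level (m + 1))⁻¹ ≤ 2 ^ (2 - 4 * (m : ℝ)) := by
  have hnat : 16 ^ m ≤ 4 * (layerCard level m * layerCard level (m + 1)) :=
    calc 16 ^ m = 4 ^ m * 4 ^ m := by rw [← mul_pow]; norm_num
      _ ≤ 4 * layerCard level m * layerCard level (m + 1) :=
        Nat.mul_le_mul (four_pow_le_four_mul_layerCard_level m)
          (four_pow_le_layerCard_level_succ m)
      _ = _ := by ring
  have hreal : (16 : ℝ) ^ m ≤ 4 * (layerCard level m * layerCard level (m + 1)) := by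
    exact_mod_cast hnat
  rw [Real.rpow_sub two_pos, Real.rpow_mul zero_le_two, Real.rpow_natCast]
  refine inv_le_of_inv_le₀ (by positivity) ?_
  rw [inv_div, div_le_iff₀ (by norm_num)]
  norm_num
  linarith

noncomputable def weight (α : ℝ) (x : Sstar) : ℝ := 2 ^ 7 * ((2 : ℝ) ^ (α / 2 - 3)) ^ level x

theorem weight_nonneg (α : ℝ) (x : Sstar) : 0 ≤ weight α x := by
  unfold weight; positivity

theorem summable_weight {α : ℝ} (hα : α < 2) : Summable (weight α) := by
  have hratio : 4 * (2 : ℝ) ^ (α / 2 - 3) < 1 := by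
    rw [show (4 : ℝ) = 2 ^ (2 : ℝ) by norm_num, ← Real.rpow_add two_pos]
    exact Real.rpow_lt_one_of_one_lt_of_neg one_lt_two (by linarith)
  exact (summable_pow_level layerCard_level_ne_zero (by positivity) hratio
    fun m => by exact_mod_cast layerCard_level_le m).mul_left _

theorem energy_adjacent_le {α : ℝ} (hα0 : 0 ≤ 2 + α) (hα2 : α ≤ 2) {x y : Sstar}
    (hxy : level y = level x + 1) :
    max 1 (‖(x : ℂ) - y‖ ^ (2 + α)) *
        (((layerCard level (level x) : ℝ) * layerCard level (level x + 1))⁻¹) ^ 2 ≤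
      weight α x * weight α y := by
  set m := level x
  have hdist : max 1 (‖(x : ℂ) - y‖ ^ (2 + α)) ≤ 2 ^ ((m + 2) * (2 + α)) := by
    refine max_le (Real.one_le_rpow one_le_two (by positivity)) ?_
    calc ‖(x : ℂ) - y‖ ^ (2 + α) ≤ ((2 : ℝ) ^ (m + 2)) ^ (2 + α) :=
          Real.rpow_le_rpow (norm_nonneg _) (norm_sub_le_two_pow (by omega) hxy.le) hα0
      _ = 2 ^ ((m + 2) * (2 + α)) := by rw [← Real.rpow_natCast_mul zero_le_two]; push_cast; rfl
  calc _ ≤ 2 ^ ((m + 2) * (2 + α)) * ((2 : ℝ) ^ (2 - 4 * (m : ℝ))) ^ 2 :=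
        mul_le_mul hdist (pow_le_pow_left₀ (by positivity) (inv_layerCard_level_mul_le m) 2)
          (by positivity) (by positivity)
    _ = 2 ^ ((m + 2) * (2 + α) + (2 - 4 * m) * 2) := by
        rw [← Real.rpow_mul_natCast zero_le_two, ← Real.rpow_add two_pos]
        norm_num
    _ ≤ 2 ^ (7 + (α / 2 - 3) * m + (7 + (α / 2 - 3) * (m + 1))) :=
        Real.rpow_le_rpow_of_exponent_le one_le_two (by nlinarith)
    _ = weight α x * weight α y := by
        rw [weight, weight, hxy, ← Real.rpow_mul_natCast zero_le_two,
          ← Real.rpow_mul_natCast zero_le_two, Real.rpow_add two_pos, Real.rpow_add two_pos,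
          Real.rpow_add two_pos]
        push_cast
        ring

end Sstar

open Sstar LayeredFlux

theorem transience_Sstar (α : ℝ) (hα0 : 0 < α) (hα2 : α < 2) :
    ∃ f : Sstar → Sstar → ℝ,
      (∀ x y : Sstar, f x y = - f y x) ∧
      (∀ x : Sstar, Summable (fun y : Sstar => |f x y|)) ∧
      (∀ x : Sstar, ∑' y : Sstar, f x y = if (x : ℂ) = 0 then 1 else 0) ∧
      Summable (fun p : Sstar × Sstar =>
        max 1 (‖(p.1 : ℂ) - (p.2 : ℂ)‖ ^ (2 + α)) * f p.1 p.2 ^ 2) := by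
  have hflux := hasSum_layerFlux layerCard_level_ne_zero
  refine ⟨layerFlux level, layerFlux_antisymm level, fun x => (hflux x).summable.abs,
    fun x => ?_, ?_⟩
  · simp [(hflux x).tsum_eq, layerCard_level_zero, level_eq_zero_iff]
  · have hw := summable_weight hα2
    refine .of_nonneg_of_le (fun p => by positivity) (fun p => ?_)
      (hw.mul_of_nonneg hw (weight_nonneg α) (weight_nonneg α))
    exact mul_layerFlux_sq_le (fun x y => by rw [norm_sub_rev]) (weight_nonneg α)
      (fun x y hxy => energy_adjacent_le (by linarith) hα2.le hxy) p.1 p.2
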